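/- Let H ∈ C(ℝⁿ×ℝⁿ) satisfy condition (A6)₊. Then for every x ∈ ℝⁿ the sublevel set {p ∈ ℝⁿ : H(x,p) ≤ 0} is convex. -/
import Mathlib


noncomputable section

open Filter Set Topology

namespace HJpaper

/-- Points of `ℝⁿ` (with the Euclidean norm). -/
abbrev E (n : ℕ) := EuclideanSpace ℝ (Fin n)

/-- The vector of `ℝⁿ` with integer coordinates `k`. -/
def lat (n : ℕ) (k : Fin n → ℤ) : E n :=
  (WithLp.equiv 2 (Fin n → ℝ)).symm fun i => (k i : ℝ)

/-- `f : ℝⁿ → ℝ` is `ℤⁿ`-periodic. -/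
def Per {n : ℕ} (f : E n → ℝ) : Prop :=
  ∀ (x : E n) (k : Fin n → ℤ), f (x + lat n k) = f x

/-- (A2): continuity of the Hamiltonian. -/
def ContH {n : ℕ} (H : E n → E n → ℝ) : Prop :=
  Continuous fun q : E n × E n => H q.1 q.2

/-- (A3): `ℤⁿ`-periodicity of the Hamiltonian in `x`. -/
def PerH {n : ℕ} (H : E n → E n → ℝ) : Prop :=
  ∀ p : E n, Per fun x => H x p

/-- (A4): coercivity of the Hamiltonian. -/
def Coercive {n : ℕ} (H : E n → E n → ℝ) : Prop :=
  ∀ M : ℝ, ∃ r : ℝ, ∀ x p : E n, r ≤ ‖p‖ → M ≤ H x p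

/-- viscosity subsolution of `u_t + H(x, D_x u) = 0` in `Q = ℝⁿ × (0,∞)`. -/
def CPSub {n : ℕ} (H : E n → E n → ℝ) (u : E n → ℝ → ℝ) : Prop :=
  ∀ φ : E n → ℝ → ℝ, ContDiff ℝ 1 (fun q : E n × ℝ => φ q.1 q.2) →
    ∀ (x : E n) (t : ℝ), 0 < t →
      IsLocalMaxOn (fun q : E n × ℝ => u q.1 q.2 - φ q.1 q.2)
        {q : E n × ℝ | 0 < q.2} (x, t) →
      deriv (fun s => φ x s) t + H x (gradient (fun y => φ y t) x) ≤ 0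

/-- viscosity supersolution of `u_t + H(x, D_x u) = 0` in `Q = ℝⁿ × (0,∞)`. -/
def CPSuper {n : ℕ} (H : E n → E n → ℝ) (u : E n → ℝ → ℝ) : Prop :=
  ∀ φ : E n → ℝ → ℝ, ContDiff ℝ 1 (fun q : E n × ℝ => φ q.1 q.2) →
    ∀ (x : E n) (t : ℝ), 0 < t →
      IsLocalMinOn (fun q : E n × ℝ => u q.1 q.2 - φ q.1 q.2)
        {q : E n × ℝ | 0 < q.2} (x, t) →
      0 ≤ deriv (fun s => φ x s) t + H x (gradient (fun y => φ y t) x)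

/-- viscosity solution of `u_t + H(x, D_x u) = 0` in `Q`. -/
def CPSol {n : ℕ} (H : E n → E n → ℝ) (u : E n → ℝ → ℝ) : Prop :=
  CPSub H u ∧ CPSuper H u

/-- `u` is a solution of the Cauchy problem (CP) for the data `u₀`: it is uniformly
continuous on `ℝⁿ × [0,∞)`, `ℤⁿ`-periodic in `x`, a viscosity solution of the PDE in
`Q = ℝⁿ × (0,∞)`, and attains the initial data (continuously, by uniform continuity). -/
def IsCP {n : ℕ} (H : E n → E n → ℝ) (u₀ : E n → ℝ) (u : E n → ℝ → ℝ) : Prop :=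
  UniformContinuousOn (fun q : E n × ℝ => u q.1 q.2) {q : E n × ℝ | 0 ≤ q.2} ∧
  (∀ t : ℝ, 0 ≤ t → Per fun x => u x t) ∧
  CPSol H u ∧
  ∀ x : E n, u x 0 = u₀ x

/-- viscosity subsolution of `H(x, Dv(x)) ≤ g(x)` in `ℝⁿ`. -/
def StatSub {n : ℕ} (H : E n → E n → ℝ) (g : E n → ℝ) (v : E n → ℝ) : Prop :=
  ∀ φ : E n → ℝ, ContDiff ℝ 1 φ →
    ∀ x : E n, IsLocalMax (fun y => v y - φ y) x → H x (gradient φ x) ≤ g x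

/-- viscosity supersolution of `H(x, Dv(x)) ≥ g(x)` in `ℝⁿ`. -/
def StatSuper {n : ℕ} (H : E n → E n → ℝ) (g : E n → ℝ) (v : E n → ℝ) : Prop :=
  ∀ φ : E n → ℝ, ContDiff ℝ 1 φ →
    ∀ x : E n, IsLocalMin (fun y => v y - φ y) x → g x ≤ H x (gradient φ x)

/-- viscosity solution of `H(x, Dv(x)) = c` in `ℝⁿ`. -/
def StatSol {n : ℕ} (H : E n → E n → ℝ) (c : ℝ) (v : E n → ℝ) : Prop :=
  StatSub H (fun _ => c) v ∧ StatSuper H (fun _ => c) v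

/-- Lipschitz continuity (with some constant). -/
def IsLip {n : ℕ} (f : E n → ℝ) : Prop := ∃ K : NNReal, LipschitzWith K f

/-- (A5): the additive eigenvalue is zero, i.e. `H(x,Dv)=0` has a Lipschitz
`ℤⁿ`-periodic viscosity solution. -/
def A5 {n : ℕ} (H : E n → E n → ℝ) : Prop :=
  ∃ v : E n → ℝ, IsLip v ∧ Per v ∧ StatSol H 0 v

/-- condition (A6)₊. -/
def A6plus {n : ℕ} (H : E n → E n → ℝ) : Prop :=
  ∃ η₀ > (0:ℝ), ∃ θ₀ > (1:ℝ),
    ∀ η ∈ Set.Ioo (0:ℝ) η₀, ∀ θ ∈ Set.Ioo (1:ℝ) θ₀, ∃ ψ > (0:ℝ),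
      ∀ x p q : E n, H x p ≤ 0 → η ≤ H x q → η * θ + ψ ≤ H x (p + θ • (q - p))

/-- condition (A6)₋. -/
def A6minus {n : ℕ} (H : E n → E n → ℝ) : Prop :=
  ∃ η₀ > (0:ℝ), ∃ θ₀ > (1:ℝ),
    ∀ η ∈ Set.Ioo (0:ℝ) η₀, ∀ θ ∈ Set.Ioo (1:ℝ) θ₀, ∃ ψ > (0:ℝ),
      ∀ x p q : E n, H x p ≤ 0 → -η ≤ H x q → -(η * θ) + ψ ≤ H x (p + θ • (q - p))

/-- the modulus `ω_{H,R}`. -/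
def omegaH {n : ℕ} (H : E n → E n → ℝ) (R r : ℝ) : ℝ :=
  sSup {a : ℝ | ∃ x p q : E n, ‖p‖ ≤ R ∧ ‖q‖ ≤ R ∧ ‖p - q‖ ≤ r ∧ a = |H x p - H x q|}

/-- `w(x,t) = sup_{s ≥ t} [u(x,t) − v₀(x) − θ(u(x,s) − v₀(x) + η(s−t))]`. -/
def wPlus {n : ℕ} (u : E n → ℝ → ℝ) (v₀ : E n → ℝ) (η θ : ℝ) (x : E n) (t : ℝ) : ℝ :=
  sSup {a : ℝ | ∃ s : ℝ, t ≤ s ∧ a = u x t - v₀ x - θ * (u x s - v₀ x + η * (s - t))}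

/-- `w(x,t) = max_{0 ≤ s ≤ t} [u(x,t) − v₀(x) − θ(u(x,s) − v₀(x) − η(s−t))]`. -/
def wMinus {n : ℕ} (u : E n → ℝ → ℝ) (v₀ : E n → ℝ) (η θ : ℝ) (x : E n) (t : ℝ) : ℝ :=
  sSup {a : ℝ | ∃ s : ℝ, 0 ≤ s ∧ s ≤ t ∧ a = u x t - v₀ x - θ * (u x s - v₀ x - η * (s - t))}

/-- under (A6)₊ the sublevel set `{p : H(x,p) ≤ 0}` is convex. -/
theorem stmt_15 {n : ℕ} (H : E n → E n → ℝ) (hHc : ContH H) (hA6 : A6plus H) :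
    ∀ x : E n, Convex ℝ {p : E n | H x p ≤ 0} := by
  obtain ⟨η₀, hη₀, θ₀, hθ₀, hA⟩ := hA6
  intro x p hp q hq a b ha hb hab
  simp only [Set.mem_setOf_eq] at hp hq ⊢
  by_contra hcon
  push_neg at hcon
  set d : E n := q - p with hd
  set g : ℝ → ℝ := fun s => H x (p + s • d) with hgdef
  have hg : Continuous g := by
    have : Continuous fun s : ℝ => ((x, p + s • d) : E n × E n) := by
      fun_prop
    exact hHc.comp this
  have hcomb : a • p + b • q = p + b • d := by
    have haa : a = 1 - b := by linarith
    rw [haa, hd]; module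
  have hg0 : g 0 = H x p := by simp [hgdef]
  have hg1 : g 1 = H x q := by simp [hgdef, hd]
  have hgb : 0 < g b := by
    rw [hgdef]; simpa [hcomb] using hcon
  -- choose η
  set η : ℝ := min η₀ (g b) / 2 with hηdef
  have hηpos : 0 < η := by positivity
  have hηlt : η < η₀ := by
    have : min η₀ (g b) ≤ η₀ := min_le_left _ _
    rw [hηdef]; linarith
  have hηle : η ≤ g b := by
    have : min η₀ (g b) ≤ g b := min_le_right _ _
    rw [hηdef]; linarith
  -- IVT to find s₁ ∈ [0, b] with g s₁ = η
  have hb1 : (0:ℝ) ≤ b := hb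
  have hIVT := intermediate_value_Icc hb1 hg.continuousOn
  have hηmem : η ∈ Set.Icc (g 0) (g b) := by
    constructor
    · rw [hg0]; linarith
    · exact hηle
  obtain ⟨s₁, hs₁mem, hs₁⟩ := hIVT hηmem
  have hs₁pos : 0 < s₁ := by
    rcases lt_or_ge 0 s₁ with h | h
    · exact h
    · exfalso
      have : s₁ = 0 := le_antisymm h hs₁mem.1
      rw [this, hg0] at hs₁
      linarith
  have hs₁le1 : s₁ ≤ 1 := by
    have hble : b ≤ 1 := by linarith
    exact hs₁mem.2.trans hble
  -- propagation step
  have key : ∀ s : ℝ, 0 < s → η ≤ g s → ∀ θ : ℝ, θ ∈ Set.Ioo (1:ℝ) θ₀ → η ≤ g (θ * s) := by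
    intro s hs hgs θ hθ
    obtain ⟨ψ, hψ, hAψ⟩ := hA η ⟨hηpos, hηlt⟩ θ hθ
    have h1 : H x p ≤ 0 := hp
    have h2 : η ≤ H x (p + s • d) := hgs
    have := hAψ x p (p + s • d) h1 h2
    have heq : p + θ • (p + s • d - p) = p + (θ * s) • d := by
      rw [add_sub_cancel_left, smul_smul]
    rw [heq] at this
    have : η * θ + ψ ≤ g (θ * s) := this
    nlinarith [hθ.1]
  -- the set T
  set T : Set ℝ := {s | s ∈ Set.Icc s₁ 1 ∧ η ≤ g s} with hT
  have hTne : T.Nonempty := ⟨s₁, ⟨le_refl _, hs₁le1⟩, le_of_eq hs₁.symm⟩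
  have hTbdd : BddAbove T := ⟨1, fun s hs => hs.1.2⟩
  have hTclosed : IsClosed T := by
    have : T = Set.Icc s₁ 1 ∩ g ⁻¹' Set.Ici η := by
      ext s; simp only [hT, Set.mem_setOf_eq, Set.mem_inter_iff, Set.mem_preimage, Set.mem_Ici]
    rw [this]
    exact isClosed_Icc.inter (isClosed_Ici.preimage hg)
  set c : ℝ := sSup T with hc
  have hcT : c ∈ T := hTclosed.csSup_mem hTne hTbdd
  have hcle1 : c ≤ 1 := hcT.1.2
  have hcpos : 0 < c := lt_of_lt_of_le hs₁pos hcT.1.1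
  have hc1 : c = 1 := by
    by_contra hne
    have hclt : c < 1 := lt_of_le_of_ne hcle1 hne
    -- pick θ
    set θ : ℝ := (1 + min θ₀ (1/c)) / 2 with hθdef
    have h1c : 1 < 1 / c := by rw [lt_div_iff₀ hcpos]; linarith
    have hmin1 : 1 < min θ₀ (1/c) := lt_min hθ₀ h1c
    have hθ1 : 1 < θ := by rw [hθdef]; linarith
    have hθltθ₀ : θ < θ₀ := by
      have : min θ₀ (1/c) ≤ θ₀ := min_le_left _ _
      rw [hθdef]; linarith
    have hθc : θ * c < 1 := by
      have hm : min θ₀ (1/c) ≤ 1 / c := min_le_right _ _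
      have hθlt : θ < 1 / c := by rw [hθdef]; linarith
      calc θ * c < (1/c) * c := by
            exact mul_lt_mul_of_pos_right hθlt hcpos
        _ = 1 := by field_simp
    have hmem : θ * c ∈ T := by
      refine ⟨⟨?_, le_of_lt hθc⟩, key c hcpos hcT.2 θ ⟨hθ1, hθltθ₀⟩⟩
      calc s₁ ≤ c := hcT.1.1
        _ = 1 * c := (one_mul c).symm
        _ ≤ θ * c := mul_le_mul_of_nonneg_right (le_of_lt hθ1) (le_of_lt hcpos)
    have : θ * c ≤ c := le_csSup hTbdd hmem
    nlinarith
  have : η ≤ g 1 := by rw [← hc1]; exact hcT.2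
  rw [hg1] at this
  linarith
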